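/- arXiv:2603.20603 — 11 statements merged into one kernel-verified Lean document; each statement's English description precedes it below -/
import Mathlib

section
/- Assume k ≥ 3, Dr1 + Dg2 > Dg1 + Dr2, and (k²-k-1)·(Dr1-Dr2) + (Dg1-Dg2) < 0. Then for every cooperator fraction p ∈ (0,1), the distribution Π* = (1,0) maximizes the gradient of cooperation selection: for all π1 ∈ [0,1), H1(π1, p) < H1(1, p). -/
/-- Gradient-of-selection factor for the two-game variable game framework:
`H1 k Dg1 Dr1 Dg2 Dr2 π1 p` with stationary distribution `(π1, 1-π1)`. -/
noncomputable def H1 (k : ℕ) (Dg1 Dr1 Dg2 Dr2 π1 p : ℝ) : ℝ :=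
  -((k : ℝ) ^ 2 - k - 1) * (π1 * Dr1 + (1 - π1) * Dr2)
    - (π1 * Dg1 + (1 - π1) * Dg2)
    + ((k : ℝ) ^ 2 - k - 2) * p * (π1 * (Dr1 - Dg1) + (1 - π1) * (Dr2 - Dg2))

theorem max_gradient_case1_i (k : ℕ) (hk : 3 ≤ k) (Dg1 Dr1 Dg2 Dr2 : ℝ)
    (hDg1 : Dg1 ∈ Set.Icc (-1 : ℝ) 1) (hDr1 : Dr1 ∈ Set.Icc (-1 : ℝ) 1)
    (hDg2 : Dg2 ∈ Set.Icc (-1 : ℝ) 1) (hDr2 : Dr2 ∈ Set.Icc (-1 : ℝ) 1)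
    (hcase : Dr1 + Dg2 > Dg1 + Dr2)
    (hcond : ((k : ℝ) ^ 2 - k - 1) * (Dr1 - Dr2) + (Dg1 - Dg2) < 0) :
    ∀ p ∈ Set.Ioo (0 : ℝ) 1, ∀ π1 ∈ Set.Ico (0 : ℝ) 1,
      H1 k Dg1 Dr1 Dg2 Dr2 π1 p < H1 k Dg1 Dr1 Dg2 Dr2 1 p := by
  intro p hp π1 hπ
  obtain ⟨hp0, hp1⟩ := hp
  obtain ⟨hπ0, hπ1⟩ := hπ
  have hk3 : (3:ℝ) ≤ (k:ℝ) := by exact_mod_cast hk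
  have hK : (5:ℝ) ≤ (k:ℝ)^2 - (k:ℝ) - 1 := by nlinarith
  set K := (k:ℝ)^2 - (k:ℝ) - 1 with hKdef
  have hA : Dr1 - Dr2 > Dg1 - Dg2 := by linarith
  have hf0 : 0 < -(K*(Dr1-Dr2) + (Dg1-Dg2)) := by linarith
  have hf1 : 0 < -(Dr1-Dr2) - K*(Dg1-Dg2) := by nlinarith [sq_nonneg K]
  have hmix : 0 < (1-p)*(-(K*(Dr1-Dr2)+(Dg1-Dg2))) + p*(-(Dr1-Dr2)-K*(Dg1-Dg2)) := by
    have := mul_pos (by linarith : (0:ℝ) < 1-p) hf0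
    have := mul_pos hp0 hf1
    linarith
  rw [hKdef] at hmix
  simp only [H1]
  nlinarith [mul_pos (by linarith : (0:ℝ) < 1-π1) hmix]
end

section
/- Assume k ≥ 3, Dr1 + Dg2 > Dg1 + Dr2, and (k²-k-1)·(Dg1-Dg2) + (Dr1-Dr2) > 0. Then for every cooperator fraction p ∈ (0,1), the distribution Π* = (0,1) maximizes the gradient of cooperation selection: for all π1 ∈ (0,1], H1(π1, p) < H1(0, p). -/
theorem max_gradient_case1_ii (k : ℕ) (hk : 3 ≤ k) (Dg1 Dr1 Dg2 Dr2 : ℝ)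
    (hDg1 : Dg1 ∈ Set.Icc (-1 : ℝ) 1) (hDr1 : Dr1 ∈ Set.Icc (-1 : ℝ) 1)
    (hDg2 : Dg2 ∈ Set.Icc (-1 : ℝ) 1) (hDr2 : Dr2 ∈ Set.Icc (-1 : ℝ) 1)
    (hcase : Dr1 + Dg2 > Dg1 + Dr2)
    (hcond : ((k : ℝ) ^ 2 - k - 1) * (Dg1 - Dg2) + (Dr1 - Dr2) > 0) :
    ∀ p ∈ Set.Ioo (0 : ℝ) 1, ∀ π1 ∈ Set.Ioc (0 : ℝ) 1,
      H1 k Dg1 Dr1 Dg2 Dr2 π1 p < H1 k Dg1 Dr1 Dg2 Dr2 0 p := by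
  intro p hp π1 hπ
  obtain ⟨hp0, hp1⟩ := hp
  obtain ⟨hπ0, hπ1⟩ := hπ
  have hk' : (3 : ℝ) ≤ (k : ℝ) := by exact_mod_cast hk
  have hB : (0 : ℝ) < (k : ℝ) ^ 2 - k - 2 := by nlinarith
  have hD : Dr1 - Dg1 - (Dr2 - Dg2) > 0 := by linarith
  -- E(p) < E(1) < 0
  unfold H1
  have key : -((k : ℝ) ^ 2 - k - 1) * (Dr1 - Dr2) - (Dg1 - Dg2)
      + ((k : ℝ) ^ 2 - k - 2) * p * (Dr1 - Dg1 - (Dr2 - Dg2)) < 0 := by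
    have h1 : ((k : ℝ) ^ 2 - k - 2) * p * (Dr1 - Dg1 - (Dr2 - Dg2))
        < ((k : ℝ) ^ 2 - k - 2) * 1 * (Dr1 - Dg1 - (Dr2 - Dg2)) := by
      apply mul_lt_mul_of_pos_right _ hD
      exact mul_lt_mul_of_pos_left hp1 hB
    nlinarith
  nlinarith [mul_pos hπ0 (neg_pos.mpr key)]
end

section
/- Assume k ≥ 3, Dr1 + Dg2 > Dg1 + Dr2, (k²-k-1)·(Dr1-Dr2) + (Dg1-Dg2) > 0, and (k²-k-1)·(Dg1-Dg2) + (Dr1-Dr2) < 0. Set p* = [(k²-k-1)·(Dr1-Dr2) + (Dg1-Dg2)] / [(k²-k-2)·(Dr1-Dg1-Dr2+Dg2)]. Then p* ∈ (0,1), and: for every p ∈ (0, p*) and every π1 ∈ (0,1], H1(π1, p) < H1(0, p); while for every p ∈ (p*, 1) and every π1 ∈ [0,1), H1(π1, p) < H1(1, p). -/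
theorem max_gradient_case1_iii (k : ℕ) (hk : 3 ≤ k) (Dg1 Dr1 Dg2 Dr2 : ℝ)
    (hDg1 : Dg1 ∈ Set.Icc (-1 : ℝ) 1) (hDr1 : Dr1 ∈ Set.Icc (-1 : ℝ) 1)
    (hDg2 : Dg2 ∈ Set.Icc (-1 : ℝ) 1) (hDr2 : Dr2 ∈ Set.Icc (-1 : ℝ) 1)
    (hcase : Dr1 + Dg2 > Dg1 + Dr2)
    (hcond1 : ((k : ℝ) ^ 2 - k - 1) * (Dr1 - Dr2) + (Dg1 - Dg2) > 0)
    (hcond2 : ((k : ℝ) ^ 2 - k - 1) * (Dg1 - Dg2) + (Dr1 - Dr2) < 0)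
    (pstar : ℝ)
    (hpstar : pstar = (((k : ℝ) ^ 2 - k - 1) * (Dr1 - Dr2) + (Dg1 - Dg2)) /
      (((k : ℝ) ^ 2 - k - 2) * (Dr1 - Dg1 - Dr2 + Dg2))) :
    pstar ∈ Set.Ioo (0 : ℝ) 1 ∧
    (∀ p ∈ Set.Ioo (0 : ℝ) pstar, ∀ π1 ∈ Set.Ioc (0 : ℝ) 1,
      H1 k Dg1 Dr1 Dg2 Dr2 π1 p < H1 k Dg1 Dr1 Dg2 Dr2 0 p) ∧
    (∀ p ∈ Set.Ioo pstar (1 : ℝ), ∀ π1 ∈ Set.Ico (0 : ℝ) 1,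
      H1 k Dg1 Dr1 Dg2 Dr2 π1 p < H1 k Dg1 Dr1 Dg2 Dr2 1 p) := by
  have hK : (3:ℝ) ≤ k := by exact_mod_cast hk
  have hB : (0:ℝ) < (k:ℝ)^2 - k - 2 := by nlinarith
  have hd : 0 < Dr1 - Dg1 - Dr2 + Dg2 := by linarith
  have hden : 0 < ((k:ℝ)^2 - k - 2) * (Dr1 - Dg1 - Dr2 + Dg2) := mul_pos hB hd
  have hp0 : 0 < pstar := by rw [hpstar]; exact div_pos hcond1 hden
  have hp1 : pstar < 1 := by
    rw [hpstar, div_lt_one hden]; nlinarith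
  refine ⟨⟨hp0, hp1⟩, ?_, ?_⟩
  · intro p hp π1 hπ
    have h := hp.2
    rw [hpstar, lt_div_iff₀ hden] at h
    have hpd : ((k:ℝ)^2 - k - 2) * p * (Dr1 - Dg1 - Dr2 + Dg2)
        < ((k:ℝ)^2-k-1)*(Dr1-Dr2) + (Dg1-Dg2) := by nlinarith
    have hπ0 := hπ.1
    simp only [H1]
    nlinarith [mul_pos hπ0 (sub_pos.mpr hpd)]
  · intro p hp π1 hπ
    have h := hp.1
    rw [hpstar, div_lt_iff₀ hden] at h
    have hpd : ((k:ℝ)^2-k-1)*(Dr1-Dr2) + (Dg1-Dg2)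
        < ((k:ℝ)^2 - k - 2) * p * (Dr1 - Dg1 - Dr2 + Dg2) := by nlinarith
    have hπ1 := hπ.2
    simp only [H1]
    nlinarith [mul_pos (sub_pos.mpr hπ1) (sub_pos.mpr hpd)]
end

section
/- Assume k ≥ 3, Dr1 + Dg2 < Dg1 + Dr2, and (k²-k-1)·(Dr1-Dr2) + (Dg1-Dg2) > 0. Then for every cooperator fraction p ∈ (0,1), the distribution Π* = (0,1) maximizes the gradient of cooperation selection: for all π1 ∈ (0,1], H1(π1, p) < H1(0, p). -/
theorem max_gradient_case2_i (k : ℕ) (hk : 3 ≤ k) (Dg1 Dr1 Dg2 Dr2 : ℝ)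
    (hDg1 : Dg1 ∈ Set.Icc (-1 : ℝ) 1) (hDr1 : Dr1 ∈ Set.Icc (-1 : ℝ) 1)
    (hDg2 : Dg2 ∈ Set.Icc (-1 : ℝ) 1) (hDr2 : Dr2 ∈ Set.Icc (-1 : ℝ) 1)
    (hcase : Dr1 + Dg2 < Dg1 + Dr2)
    (hcond : ((k : ℝ) ^ 2 - k - 1) * (Dr1 - Dr2) + (Dg1 - Dg2) > 0) :
    ∀ p ∈ Set.Ioo (0 : ℝ) 1, ∀ π1 ∈ Set.Ioc (0 : ℝ) 1,
      H1 k Dg1 Dr1 Dg2 Dr2 π1 p < H1 k Dg1 Dr1 Dg2 Dr2 0 p := by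
  intro p hp π1 hπ
  have hk3 : (3:ℝ) ≤ (k:ℝ) := by exact_mod_cast hk
  have hkq : (4:ℝ) ≤ (k:ℝ)^2 - k - 2 := by nlinarith
  unfold H1
  have hd : Dr1 - Dr2 - (Dg1 - Dg2) < 0 := by linarith
  have h2 : ((k:ℝ)^2 - k - 2) * p * (Dr1 - Dr2 - (Dg1 - Dg2)) < 0 :=
    mul_neg_of_pos_of_neg (mul_pos (by linarith) hp.1) hd
  nlinarith [mul_pos hπ.1 (sub_pos.mpr hcond),
    mul_pos hπ.1 (neg_pos.mpr h2)]
end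

section
/- Assume k ≥ 3, Dr1 + Dg2 < Dg1 + Dr2, and (k²-k-1)·(Dg1-Dg2) + (Dr1-Dr2) < 0. Then for every cooperator fraction p ∈ (0,1), the distribution Π* = (1,0) maximizes the gradient of cooperation selection: for all π1 ∈ [0,1), H1(π1, p) < H1(1, p). -/
theorem max_gradient_case2_ii (k : ℕ) (hk : 3 ≤ k) (Dg1 Dr1 Dg2 Dr2 : ℝ)
    (hDg1 : Dg1 ∈ Set.Icc (-1 : ℝ) 1) (hDr1 : Dr1 ∈ Set.Icc (-1 : ℝ) 1)
    (hDg2 : Dg2 ∈ Set.Icc (-1 : ℝ) 1) (hDr2 : Dr2 ∈ Set.Icc (-1 : ℝ) 1)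
    (hcase : Dr1 + Dg2 < Dg1 + Dr2)
    (hcond : ((k : ℝ) ^ 2 - k - 1) * (Dg1 - Dg2) + (Dr1 - Dr2) < 0) :
    ∀ p ∈ Set.Ioo (0 : ℝ) 1, ∀ π1 ∈ Set.Ico (0 : ℝ) 1,
      H1 k Dg1 Dr1 Dg2 Dr2 π1 p < H1 k Dg1 Dr1 Dg2 Dr2 1 p := by

  intro p hp π1 hπ
  obtain ⟨hp0, hp1⟩ := hp
  obtain ⟨hπ0, hπ1⟩ := hπ
  have hk' : (3:ℝ) ≤ (k:ℝ) := by exact_mod_cast hk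
  have hK : (4:ℝ) ≤ (k:ℝ)^2 - k - 2 := by nlinarith
  set A : ℝ := -((k : ℝ) ^ 2 - k - 1) * (Dr1 - Dr2) - (Dg1 - Dg2) with hA
  set B : ℝ := ((k : ℝ) ^ 2 - k - 2) * ((Dr1 - Dr2) - (Dg1 - Dg2)) with hB
  have hB0 : B < 0 := by
    have : Dr1 - Dr2 - (Dg1 - Dg2) < 0 := by linarith
    nlinarith
  have hAB : 0 < A + B := by
    have : A + B = -(((k : ℝ) ^ 2 - k - 1) * (Dg1 - Dg2) + (Dr1 - Dr2)) := by ring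
    linarith [this ▸ neg_pos.mpr hcond]
  have hpos : 0 < A + B * p := by nlinarith
  have hdiff : H1 k Dg1 Dr1 Dg2 Dr2 1 p - H1 k Dg1 Dr1 Dg2 Dr2 π1 p = (1 - π1) * (A + B * p) := by
    simp only [H1, hA, hB]; ring
  nlinarith [mul_pos (by linarith : (0:ℝ) < 1 - π1) hpos]
end

section
/- Assume k ≥ 3, Dr1 + Dg2 < Dg1 + Dr2, (k²-k-1)·(Dr1-Dr2) + (Dg1-Dg2) < 0, and (k²-k-1)·(Dg1-Dg2) + (Dr1-Dr2) > 0. Set p* = [(k²-k-1)·(Dr1-Dr2) + (Dg1-Dg2)] / [(k²-k-2)·(Dr1-Dg1-Dr2+Dg2)]. Then p* ∈ (0,1), and: for every p ∈ (0, p*) and every π1 ∈ [0,1), H1(π1, p) < H1(1, p); while for every p ∈ (p*, 1) and every π1 ∈ (0,1], H1(π1, p) < H1(0, p). -/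
theorem max_gradient_case2_iii (k : ℕ) (hk : 3 ≤ k) (Dg1 Dr1 Dg2 Dr2 : ℝ)
    (hDg1 : Dg1 ∈ Set.Icc (-1 : ℝ) 1) (hDr1 : Dr1 ∈ Set.Icc (-1 : ℝ) 1)
    (hDg2 : Dg2 ∈ Set.Icc (-1 : ℝ) 1) (hDr2 : Dr2 ∈ Set.Icc (-1 : ℝ) 1)
    (hcase : Dr1 + Dg2 < Dg1 + Dr2)
    (hcond1 : ((k : ℝ) ^ 2 - k - 1) * (Dr1 - Dr2) + (Dg1 - Dg2) < 0)
    (hcond2 : ((k : ℝ) ^ 2 - k - 1) * (Dg1 - Dg2) + (Dr1 - Dr2) > 0)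
    (pstar : ℝ)
    (hpstar : pstar = (((k : ℝ) ^ 2 - k - 1) * (Dr1 - Dr2) + (Dg1 - Dg2)) /
      (((k : ℝ) ^ 2 - k - 2) * (Dr1 - Dg1 - Dr2 + Dg2))) :
    pstar ∈ Set.Ioo (0 : ℝ) 1 ∧
    (∀ p ∈ Set.Ioo (0 : ℝ) pstar, ∀ π1 ∈ Set.Ico (0 : ℝ) 1,
      H1 k Dg1 Dr1 Dg2 Dr2 π1 p < H1 k Dg1 Dr1 Dg2 Dr2 1 p) ∧
    (∀ p ∈ Set.Ioo pstar (1 : ℝ), ∀ π1 ∈ Set.Ioc (0 : ℝ) 1,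
      H1 k Dg1 Dr1 Dg2 Dr2 π1 p < H1 k Dg1 Dr1 Dg2 Dr2 0 p) := by
  have hc3 : (3:ℝ) ≤ (k:ℝ) := by exact_mod_cast hk
  have hM : (0:ℝ) < (k:ℝ)^2 - k - 2 := by nlinarith
  have hD : Dr1 - Dg1 - Dr2 + Dg2 < 0 := by linarith
  have hden : ((k:ℝ)^2 - k - 2) * (Dr1 - Dg1 - Dr2 + Dg2) < 0 :=
    mul_neg_of_pos_of_neg hM hD
  have hkey : pstar * (((k:ℝ)^2 - k - 2) * (Dr1 - Dg1 - Dr2 + Dg2)) =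
      ((k:ℝ)^2 - k - 1) * (Dr1 - Dr2) + (Dg1 - Dg2) := by
    rw [hpstar]; exact div_mul_cancel₀ _ (ne_of_lt hden)
  have hp0 : 0 < pstar := by
    rw [hpstar]; exact div_pos_of_neg_of_neg hcond1 hden
  have hp1 : pstar < 1 := by nlinarith [hkey, hcond2, hden]
  refine ⟨⟨hp0, hp1⟩, ?_, ?_⟩
  · rintro p ⟨hp, hppstar⟩ π1 ⟨hπ0, hπ1⟩
    have hfp : ((k:ℝ)^2 - k - 1) * (Dr1 - Dr2) + (Dg1 - Dg2) <
        ((k:ℝ)^2 - k - 2) * (Dr1 - Dg1 - Dr2 + Dg2) * p := by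
      nlinarith [mul_lt_mul_of_neg_right hppstar hden]
    simp only [H1]
    nlinarith [mul_pos (sub_pos.mpr hπ1) (sub_pos.mpr hfp)]
  · rintro p ⟨hppstar, hp1'⟩ π1 ⟨hπ0, hπ1⟩
    have hfp : ((k:ℝ)^2 - k - 2) * (Dr1 - Dg1 - Dr2 + Dg2) * p <
        ((k:ℝ)^2 - k - 1) * (Dr1 - Dr2) + (Dg1 - Dg2) := by
      nlinarith [mul_lt_mul_of_neg_right hppstar hden]
    simp only [H1]
    nlinarith [mul_pos hπ0 (sub_pos.mpr hfp)]
end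

section
/- Assume Dg1 + Dr2 > Dg2 + Dr1 and Dg1 < Dg2. Then for every cooperator fraction p ∈ (0,1), the distribution Π* = (1,0) minimizes the fitness difference between defectors and cooperators: for all π1 ∈ [0,1), F(π1, p) > F(1, p). -/
/-- Distribution-dependent part of the fitness difference between defectors and
cooperators in the two-game variable game framework, with stationary game
distribution `(π1, 1-π1)` and cooperator fraction `p`. -/
noncomputable def Fdiff (Dg1 Dr1 Dg2 Dr2 π1 p : ℝ) : ℝ :=
  (1 - p) * (π1 * Dr1 + (1 - π1) * Dr2) + p * (π1 * Dg1 + (1 - π1) * Dg2)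

theorem min_fitness_diff_case1_ii (Dg1 Dr1 Dg2 Dr2 : ℝ)
    (hDg1 : Dg1 ∈ Set.Icc (-1 : ℝ) 1) (hDr1 : Dr1 ∈ Set.Icc (-1 : ℝ) 1)
    (hDg2 : Dg2 ∈ Set.Icc (-1 : ℝ) 1) (hDr2 : Dr2 ∈ Set.Icc (-1 : ℝ) 1)
    (hcase : Dg1 + Dr2 > Dg2 + Dr1) (hcond : Dg1 < Dg2) :
    ∀ p ∈ Set.Ioo (0 : ℝ) 1, ∀ π1 ∈ Set.Ico (0 : ℝ) 1,
      Fdiff Dg1 Dr1 Dg2 Dr2 π1 p > Fdiff Dg1 Dr1 Dg2 Dr2 1 p := by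
  rintro p ⟨hp0, hp1⟩ π1 ⟨hπ0, hπ1⟩
  unfold Fdiff
  nlinarith [mul_pos (sub_pos.2 hp1) (sub_pos.2 hπ1),
    mul_pos hp0 (sub_pos.2 hπ1),
    mul_pos (mul_pos (sub_pos.2 hp1) (sub_pos.2 hπ1)) (sub_pos.2 hcase),
    mul_pos (mul_pos hp0 (sub_pos.2 hπ1)) (sub_pos.2 hcond)]
end

section
/- Assume Dg1 + Dr2 > Dg2 + Dr1, Dr1 < Dr2, and Dg1 > Dg2. Set p* = (Dr2 - Dr1)/(Dg1 - Dg2 - Dr1 + Dr2). Then p* ∈ (0,1), and: for every p ∈ (0, p*) and every π1 ∈ [0,1), F(π1, p) > F(1, p); while for every p ∈ (p*, 1) and every π1 ∈ (0,1], F(π1, p) > F(0, p). -/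
theorem Fdiff_sub_Fdiff (Dg1 Dr1 Dg2 Dr2 π1 π1' p : ℝ) :
    Fdiff Dg1 Dr1 Dg2 Dr2 π1 p - Fdiff Dg1 Dr1 Dg2 Dr2 π1' p =
      (π1 - π1') * (p * (Dg1 - Dg2) - (1 - p) * (Dr2 - Dr1)) := by
  unfold Fdiff
  ring

section Threshold

variable {a b p : ℝ}

theorem div_add_mem_Ioo (ha : 0 < a) (hb : 0 < b) : a / (a + b) ∈ Set.Ioo 0 1 :=
  ⟨by positivity, (div_lt_one (by positivity)).2 (by linarith)⟩

theorem mul_sub_one_sub_mul_neg_iff (hab : 0 < a + b) :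
    p * b - (1 - p) * a < 0 ↔ p < a / (a + b) := by
  rw [lt_div_iff₀ hab]
  constructor <;> intro h <;> linarith

theorem mul_sub_one_sub_mul_pos_iff (hab : 0 < a + b) :
    0 < p * b - (1 - p) * a ↔ a / (a + b) < p := by
  rw [div_lt_iff₀ hab]
  constructor <;> intro h <;> linarith

end Threshold

theorem min_fitness_diff_case1_iii_general (Dg1 Dr1 Dg2 Dr2 : ℝ)
    (hcond1 : Dr1 < Dr2) (hcond2 : Dg1 > Dg2)
    (pstar : ℝ) (hpstar : pstar = (Dr2 - Dr1) / (Dg1 - Dg2 - Dr1 + Dr2)) :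
    pstar ∈ Set.Ioo (0 : ℝ) 1 ∧
    (∀ p ∈ Set.Ioo (0 : ℝ) pstar, ∀ π1 ∈ Set.Ico (0 : ℝ) 1,
      Fdiff Dg1 Dr1 Dg2 Dr2 π1 p > Fdiff Dg1 Dr1 Dg2 Dr2 1 p) ∧
    (∀ p ∈ Set.Ioo pstar (1 : ℝ), ∀ π1 ∈ Set.Ioc (0 : ℝ) 1,
      Fdiff Dg1 Dr1 Dg2 Dr2 π1 p > Fdiff Dg1 Dr1 Dg2 Dr2 0 p) := by
  have ha : 0 < Dr2 - Dr1 := sub_pos.2 hcond1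
  have hb : 0 < Dg1 - Dg2 := sub_pos.2 hcond2
  have hab : 0 < Dr2 - Dr1 + (Dg1 - Dg2) := add_pos ha hb
  replace hpstar : pstar = (Dr2 - Dr1) / (Dr2 - Dr1 + (Dg1 - Dg2)) := by
    rw [hpstar]; ring
  subst hpstar
  refine ⟨div_add_mem_Ioo ha hb, ?_, ?_⟩
  · rintro p ⟨-, hp⟩ π1 ⟨-, hπ1⟩
    rw [gt_iff_lt, ← sub_pos, Fdiff_sub_Fdiff]
    exact mul_pos_of_neg_of_neg (sub_neg.2 hπ1) ((mul_sub_one_sub_mul_neg_iff hab).2 hp)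
  · rintro p ⟨hp, -⟩ π1 ⟨hπ1, -⟩
    rw [gt_iff_lt, ← sub_pos, Fdiff_sub_Fdiff, sub_zero]
    exact mul_pos hπ1 ((mul_sub_one_sub_mul_pos_iff hab).2 hp)

theorem min_fitness_diff_case1_iii (Dg1 Dr1 Dg2 Dr2 : ℝ)
    (hDg1 : Dg1 ∈ Set.Icc (-1 : ℝ) 1) (hDr1 : Dr1 ∈ Set.Icc (-1 : ℝ) 1)
    (hDg2 : Dg2 ∈ Set.Icc (-1 : ℝ) 1) (hDr2 : Dr2 ∈ Set.Icc (-1 : ℝ) 1)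
    (hcase : Dg1 + Dr2 > Dg2 + Dr1) (hcond1 : Dr1 < Dr2) (hcond2 : Dg1 > Dg2)
    (pstar : ℝ) (hpstar : pstar = (Dr2 - Dr1) / (Dg1 - Dg2 - Dr1 + Dr2)) :
    pstar ∈ Set.Ioo (0 : ℝ) 1 ∧
    (∀ p ∈ Set.Ioo (0 : ℝ) pstar, ∀ π1 ∈ Set.Ico (0 : ℝ) 1,
      Fdiff Dg1 Dr1 Dg2 Dr2 π1 p > Fdiff Dg1 Dr1 Dg2 Dr2 1 p) ∧
    (∀ p ∈ Set.Ioo pstar (1 : ℝ), ∀ π1 ∈ Set.Ioc (0 : ℝ) 1,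
      Fdiff Dg1 Dr1 Dg2 Dr2 π1 p > Fdiff Dg1 Dr1 Dg2 Dr2 0 p) :=
  min_fitness_diff_case1_iii_general Dg1 Dr1 Dg2 Dr2 hcond1 hcond2 pstar hpstar
end

section
/- Assume Dg1 + Dr2 < Dg2 + Dr1 and Dr1 < Dr2. Then for every cooperator fraction p ∈ (0,1), the distribution Π* = (1,0) minimizes the fitness difference between defectors and cooperators: for all π1 ∈ [0,1), F(π1, p) > F(1, p). -/
theorem min_fitness_diff_case2_i (Dg1 Dr1 Dg2 Dr2 : ℝ)
    (hDg1 : Dg1 ∈ Set.Icc (-1 : ℝ) 1) (hDr1 : Dr1 ∈ Set.Icc (-1 : ℝ) 1)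
    (hDg2 : Dg2 ∈ Set.Icc (-1 : ℝ) 1) (hDr2 : Dr2 ∈ Set.Icc (-1 : ℝ) 1)
    (hcase : Dg1 + Dr2 < Dg2 + Dr1) (hcond : Dr1 < Dr2) :
    ∀ p ∈ Set.Ioo (0 : ℝ) 1, ∀ π1 ∈ Set.Ico (0 : ℝ) 1,
      Fdiff Dg1 Dr1 Dg2 Dr2 π1 p > Fdiff Dg1 Dr1 Dg2 Dr2 1 p := by
  rintro p ⟨hp0, hp1⟩ π1 ⟨hπ0, hπ1⟩
  unfold Fdiff
  nlinarith [mul_pos (sub_pos.mpr hπ1) (mul_pos hp0 (sub_pos.mpr hcase)),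
    mul_pos (sub_pos.mpr hπ1) (mul_pos (sub_pos.mpr hp1) (sub_pos.mpr hcond))]
end

section
/- Assume Dg1 + Dr2 < Dg2 + Dr1 and Dg1 > Dg2. Then for every cooperator fraction p ∈ (0,1), the distribution Π* = (0,1) minimizes the fitness difference between defectors and cooperators: for all π1 ∈ (0,1], F(π1, p) > F(0, p). -/
theorem min_fitness_diff_case2_ii (Dg1 Dr1 Dg2 Dr2 : ℝ)
    (hDg1 : Dg1 ∈ Set.Icc (-1 : ℝ) 1) (hDr1 : Dr1 ∈ Set.Icc (-1 : ℝ) 1)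
    (hDg2 : Dg2 ∈ Set.Icc (-1 : ℝ) 1) (hDr2 : Dr2 ∈ Set.Icc (-1 : ℝ) 1)
    (hcase : Dg1 + Dr2 < Dg2 + Dr1) (hcond : Dg1 > Dg2) :
    ∀ p ∈ Set.Ioo (0 : ℝ) 1, ∀ π1 ∈ Set.Ioc (0 : ℝ) 1,
      Fdiff Dg1 Dr1 Dg2 Dr2 π1 p > Fdiff Dg1 Dr1 Dg2 Dr2 0 p := by
  rintro p ⟨hp0, hp1⟩ π1 ⟨hπ0, hπ1⟩
  unfold Fdiff
  nlinarith [mul_pos hπ0 hp0, mul_pos hπ0 (sub_pos.2 hp1),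
    mul_pos (mul_pos hπ0 hp0) (sub_pos.2 hcond),
    mul_pos (mul_pos hπ0 (sub_pos.2 hp1)) (sub_pos.2 (by linarith : Dg2 + Dr2 < Dg2 + Dr1))]
end

section
/- Assume Dg1 + Dr2 < Dg2 + Dr1, Dr1 > Dr2, and Dg1 < Dg2. Set p* = (Dr2 - Dr1)/(Dg1 - Dg2 - Dr1 + Dr2). Then p* ∈ (0,1), and: for every p ∈ (0, p*) and every π1 ∈ (0,1], F(π1, p) > F(0, p); while for every p ∈ (p*, 1) and every π1 ∈ [0,1), F(π1, p) > F(1, p). -/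
theorem min_fitness_diff_case2_iii (Dg1 Dr1 Dg2 Dr2 : ℝ)
    (hDg1 : Dg1 ∈ Set.Icc (-1 : ℝ) 1) (hDr1 : Dr1 ∈ Set.Icc (-1 : ℝ) 1)
    (hDg2 : Dg2 ∈ Set.Icc (-1 : ℝ) 1) (hDr2 : Dr2 ∈ Set.Icc (-1 : ℝ) 1)
    (hcase : Dg1 + Dr2 < Dg2 + Dr1) (hcond1 : Dr1 > Dr2) (hcond2 : Dg1 < Dg2)
    (pstar : ℝ) (hpstar : pstar = (Dr2 - Dr1) / (Dg1 - Dg2 - Dr1 + Dr2)) :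
    pstar ∈ Set.Ioo (0 : ℝ) 1 ∧
    (∀ p ∈ Set.Ioo (0 : ℝ) pstar, ∀ π1 ∈ Set.Ioc (0 : ℝ) 1,
      Fdiff Dg1 Dr1 Dg2 Dr2 π1 p > Fdiff Dg1 Dr1 Dg2 Dr2 0 p) ∧
    (∀ p ∈ Set.Ioo pstar (1 : ℝ), ∀ π1 ∈ Set.Ico (0 : ℝ) 1,
      Fdiff Dg1 Dr1 Dg2 Dr2 π1 p > Fdiff Dg1 Dr1 Dg2 Dr2 1 p) := by
  have hD : Dg1 - Dg2 - Dr1 + Dr2 < 0 := by linarith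
  have hne : Dg1 - Dg2 - Dr1 + Dr2 ≠ 0 := ne_of_lt hD
  have hkey : pstar * (Dg1 - Dg2 - Dr1 + Dr2) = Dr2 - Dr1 := by
    rw [hpstar]; field_simp
  have hpos : 0 < pstar := by nlinarith
  have hlt1 : pstar < 1 := by nlinarith
  refine ⟨⟨hpos, hlt1⟩, ?_, ?_⟩
  · rintro p ⟨hp0, hp1⟩ π1 ⟨hπ0, hπ1⟩
    have hg : (Dr1 - Dr2) + p * (Dg1 - Dg2 - Dr1 + Dr2) > 0 := by nlinarith
    simp only [Fdiff]
    nlinarith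
  · rintro p ⟨hp0, hp1⟩ π1 ⟨hπ0, hπ1⟩
    have hg : (Dr1 - Dr2) + p * (Dg1 - Dg2 - Dr1 + Dr2) < 0 := by nlinarith
    simp only [Fdiff]
    nlinarith
end
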